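/- For the dense VR-TOS iteration, let E denote the conditional expectation over the uniformly sampled index i at iteration t and x* a minimizer of the primal objective. Then for any η > 0, the gradient estimator v_t = ∇ψ_i(z_t) − α_{i,t} + ᾱ_t + ∇ω(z_t) satisfies E‖v_t − ∇f(z_t)‖² ≤ (1 + η)·E‖∇f_i(z_t) − ∇f_i(x*)‖² + 2(1 + η⁻¹)·L_f·H_t, where f_i = ψ_i + ω. -/

import Mathlib

open Finset
open scoped RealInnerProductSpace

noncomputable section

variable {p : ℕ}

/-- proper, lower semicontinuous, convex extended-real function. -/
structure ProperLscConvex (g : EuclideanSpace ℝ (Fin p) → EReal) : Prop where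
  proper : ∃ x, g x ≠ ⊤
  ne_bot : ∀ x, g x ≠ ⊥
  lsc : LowerSemicontinuous g
  convex : ∀ x y : EuclideanSpace ℝ (Fin p), ∀ a b : ℝ, 0 ≤ a → 0 ≤ b → a + b = 1 →
    g (a • x + b • y) ≤ (a : EReal) * g x + (b : EReal) * g y

/-- The Bregman divergence of a differentiable convex function. -/
def bregman (f : EuclideanSpace ℝ (Fin p) → ℝ)
    (gradf : EuclideanSpace ℝ (Fin p) → EuclideanSpace ℝ (Fin p))
    (x y : EuclideanSpace ℝ (Fin p)) : ℝ :=
  f x - f y - ⟪gradf y, x - y⟫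

/-!
Put `d_i = (∇f_i(z) − ∇f_i(x*)) + (∇ψ_i(x*) − α_i)`. The `∇ω` terms cancel against their
average, so `v_i − ∇f(z) = d_i − (1/n) ∑_j d_j`, and the variance of the `d_i` is at most their
mean square. Young's inequality splits `‖d_i‖²` with weights `1 + η` and `1 + η⁻¹`, and the memory
term obeys `‖α_i − ∇ψ_i(x*)‖² ≤ 2 L_f m_i`: with equality if the memory was never updated, and
otherwise, for `α_i = ∇ψ_i(φ)`, by co-coercivity of the gradient of the convex `ψ_i`, which is
`L_f`-Lipschitz: `‖∇ψ_i(φ) − ∇ψ_i(x*)‖² ≤ 2 L_f B_{ψ_i}(φ, x*) ≤ 2 L_f B_{f_i}(φ, x*)`.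
-/

section GradientLipschitz

variable {E : Type*} [NormedAddCommGroup E] [InnerProductSpace ℝ E] [CompleteSpace E]
  {g : E → ℝ} {G : E → E}

lemma hasDerivAt_comp_add_smul_sub (hg : ∀ w, HasGradientAt g (G w) w) (x y : E) (t : ℝ) :
    HasDerivAt (fun s : ℝ => g (x + s • (y - x))) ⟪G (x + t • (y - x)), y - x⟫ t := by
  have hline : HasDerivAt (fun s : ℝ => x + s • (y - x)) (y - x) t := by
    simpa using ((hasDerivAt_id t).smul_const (y - x)).const_add x
  simpa [InnerProductSpace.toDual_apply_apply, Function.comp_def] using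
    (hg (x + t • (y - x))).hasFDerivAt.comp_hasDerivAt t hline

lemma ConvexOn.add_inner_gradient_le (hconv : ConvexOn ℝ Set.univ g)
    (hg : ∀ w, HasGradientAt g (G w) w) (x y : E) :
    g y + ⟪G y, x - y⟫ ≤ g x := by
  have hline : ConvexOn ℝ Set.univ (fun s : ℝ => g (y + s • (x - y))) := by
    have h := hconv.comp_affineMap (AffineMap.lineMap y x : ℝ →ᵃ[ℝ] E)
    simp only [Function.comp_def, AffineMap.lineMap_apply, vadd_eq_add, vsub_eq_sub,
      add_comm _ y] at h
    exact h
  have hslope := hline.le_slope_of_hasDerivAt (Set.mem_univ 0) (Set.mem_univ 1) one_pos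
    (by simpa using hasDerivAt_comp_add_smul_sub hg y x 0)
  simp only [slope_def_field, one_smul, add_sub_cancel, zero_smul, add_zero, sub_zero,
    div_one] at hslope
  linarith

lemma le_add_inner_gradient_add_sq_of_lipschitz {L : ℝ}
    (hg : ∀ w, HasGradientAt g (G w) w) (hlip : ∀ a b, ‖G a - G b‖ ≤ L * ‖a - b‖) (x y : E) :
    g y ≤ g x + ⟪G x, y - x⟫ + L / 2 * ‖y - x‖ ^ 2 := by
  set φ : ℝ → ℝ := fun t => g (x + t • (y - x)) - t * ⟪G x, y - x⟫ - L / 2 * t ^ 2 * ‖y - x‖ ^ 2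
  have hderiv : ∀ t, HasDerivAt φ
      (⟪G (x + t • (y - x)), y - x⟫ - ⟪G x, y - x⟫ - L * t * ‖y - x‖ ^ 2) t := by
    intro t
    exact (((hasDerivAt_comp_add_smul_sub hg x y t).sub
      ((hasDerivAt_id t).mul_const ⟪G x, y - x⟫)).sub
      (((hasDerivAt_pow 2 t).const_mul (L / 2)).mul_const (‖y - x‖ ^ 2))).congr_deriv
      (by push_cast; ring)
  have hnonpos : ∀ t, 0 ≤ t →
      ⟪G (x + t • (y - x)), y - x⟫ - ⟪G x, y - x⟫ - L * t * ‖y - x‖ ^ 2 ≤ 0 := by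
    intro t ht
    rw [sub_nonpos]
    have hG : ‖G (x + t • (y - x)) - G x‖ ≤ L * (t * ‖y - x‖) := by
      simpa [norm_smul, abs_of_nonneg ht] using hlip (x + t • (y - x)) x
    calc ⟪G (x + t • (y - x)), y - x⟫ - ⟪G x, y - x⟫
        = ⟪G (x + t • (y - x)) - G x, y - x⟫ := (inner_sub_left _ _ _).symm
      _ ≤ ‖G (x + t • (y - x)) - G x‖ * ‖y - x‖ := real_inner_le_norm _ _
      _ ≤ L * (t * ‖y - x‖) * ‖y - x‖ := by gcongr
      _ = L * t * ‖y - x‖ ^ 2 := by ring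
  have hanti : AntitoneOn φ (Set.Ici 0) :=
    antitoneOn_of_hasDerivWithinAt_nonpos (convex_Ici 0)
      (fun t _ => (hderiv t).continuousAt.continuousWithinAt)
      (fun t _ => (hderiv t).hasDerivWithinAt)
      (fun t ht => hnonpos t (interior_subset ht))
  have h01 := hanti (Set.self_mem_Ici) (Set.mem_Ici.2 zero_le_one) zero_le_one
  simp only [φ, one_smul, add_sub_cancel, one_mul, one_pow, mul_one, zero_smul, add_zero,
    zero_mul, sub_zero, ne_eq, OfNat.ofNat_ne_zero, not_false_eq_true, zero_pow, mul_zero] at h01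
  linarith

lemma norm_gradient_sub_sq_le_of_lipschitz {L : ℝ} (hL : 0 < L) (hconv : ConvexOn ℝ Set.univ g)
    (hg : ∀ w, HasGradientAt g (G w) w) (hlip : ∀ a b, ‖G a - G b‖ ≤ L * ‖a - b‖) (x y : E) :
    ‖G x - G y‖ ^ 2 ≤ 2 * L * (g x - g y - ⟪G y, x - y⟫) := by
  -- descent lemma at the gradient step from `x`, first-order convexity at `y`
  set d : E := -(L⁻¹ • (G x - G y))
  have hdescent := le_add_inner_gradient_add_sq_of_lipschitz hg hlip x (x + d)
  have hconvex := hconv.add_inner_gradient_le hg (x + d) y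
  have hinner : ⟪G y, x + d - y⟫ = ⟪G y, x - y⟫ + ⟪G y, d⟫ := by
    rw [show x + d - y = (x - y) + d by abel, inner_add_right]
  have hdiff : ⟪G x, d⟫ - ⟪G y, d⟫ = -(L⁻¹ * ‖G x - G y‖ ^ 2) := by
    rw [← inner_sub_left, inner_neg_right, real_inner_smul_right, real_inner_self_eq_norm_sq]
  have hnorm : ‖d‖ ^ 2 = L⁻¹ ^ 2 * ‖G x - G y‖ ^ 2 := by
    rw [norm_neg, norm_smul, mul_pow, Real.norm_eq_abs, sq_abs]
  rw [add_sub_cancel_left, hnorm] at hdescent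
  rw [hinner] at hconvex
  have key : L⁻¹ * ‖G x - G y‖ ^ 2 - L / 2 * (L⁻¹ ^ 2 * ‖G x - G y‖ ^ 2)
      ≤ g x - g y - ⟪G y, x - y⟫ := by linarith
  calc ‖G x - G y‖ ^ 2
      = 2 * L * (L⁻¹ * ‖G x - G y‖ ^ 2 - L / 2 * (L⁻¹ ^ 2 * ‖G x - G y‖ ^ 2)) := by
        field_simp; ring
    _ ≤ 2 * L * (g x - g y - ⟪G y, x - y⟫) := by gcongr

end GradientLipschitz

lemma norm_sub_le_add_mul_of_lipschitz_bounds {E F : Type*} [SeminormedAddCommGroup E]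
    [SeminormedAddCommGroup F] {G G' : E → F} {L L' : ℝ}
    (hG : ∀ a b, ‖G a - G b‖ ≤ L * ‖a - b‖) (hG' : ∀ a b, ‖G' a - G' b‖ ≤ L' * ‖a - b‖)
    (a b : E) : ‖G a - G b‖ ≤ (L + L') * ‖a - b‖ := by
  rcases (norm_nonneg (a - b)).eq_or_lt with hab | hab
  · have h := hG a b
    rwa [← hab, mul_zero] at h ⊢
  · have hL' : 0 ≤ L' := nonneg_of_mul_nonneg_left ((norm_nonneg _).trans (hG' a b)) hab
    nlinarith [hG a b]

lemma norm_add_sq_le_of_pos {E : Type*} [SeminormedAddCommGroup E] {η : ℝ} (hη : 0 < η)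
    (u w : E) : ‖u + w‖ ^ 2 ≤ (1 + η) * ‖u‖ ^ 2 + (1 + η⁻¹) * ‖w‖ ^ 2 := by
  have hyoung := two_mul_le_add_mul_sq (a := ‖u‖) (b := ‖w‖) hη
  have htri : ‖u + w‖ ^ 2 ≤ (‖u‖ + ‖w‖) ^ 2 := by gcongr; exact norm_add_le u w
  nlinarith

section Average

variable {ι E : Type*} [Fintype ι] [NormedAddCommGroup E] [InnerProductSpace ℝ E]

lemma sum_norm_sub_average_sq (d : ι → E) :
    ∑ i, ‖d i - (Fintype.card ι : ℝ)⁻¹ • ∑ j, d j‖ ^ 2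
      = ∑ i, ‖d i‖ ^ 2 - (Fintype.card ι : ℝ)⁻¹ * ‖∑ j, d j‖ ^ 2 := by
  simp only [norm_sub_sq_real, sum_add_distrib, sum_sub_distrib, ← sum_inner, ← mul_sum,
    real_inner_smul_right, real_inner_self_eq_norm_sq, norm_smul, sum_const, card_univ,
    nsmul_eq_mul, Real.norm_eq_abs, mul_pow, sq_abs]
  rcases eq_or_ne (Fintype.card ι : ℝ) 0 with hN | hN
  · simp [hN]
  · field_simp
    ring

lemma sum_norm_sub_average_sq_le (d : ι → E) :
    ∑ i, ‖d i - (Fintype.card ι : ℝ)⁻¹ • ∑ j, d j‖ ^ 2 ≤ ∑ i, ‖d i‖ ^ 2 := by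
  rw [sum_norm_sub_average_sq]
  have : 0 ≤ (Fintype.card ι : ℝ)⁻¹ * ‖∑ j, d j‖ ^ 2 := by positivity
  linarith

lemma sum_norm_sub_average_sq_le_sum_norm_sub_sq (d : ι → E) (c : E) :
    ∑ i, ‖d i - (Fintype.card ι : ℝ)⁻¹ • ∑ j, d j‖ ^ 2 ≤ ∑ i, ‖d i - c‖ ^ 2 := by
  rcases isEmpty_or_nonempty ι with hι | hι
  · simp
  have hshift (i : ι) : d i - (Fintype.card ι : ℝ)⁻¹ • ∑ j, d j
      = (d i - c) - (Fintype.card ι : ℝ)⁻¹ • ∑ j, (d j - c) := by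
    rw [sum_sub_distrib, sum_const, card_univ, ← Nat.cast_smul_eq_nsmul ℝ, smul_sub, smul_smul,
      inv_mul_cancel₀ (Nat.cast_ne_zero.2 Fintype.card_ne_zero), one_smul]
    abel
  simpa only [hshift] using sum_norm_sub_average_sq_le (fun i => d i - c)

end Average

section Bregman

variable {ψ ω : EuclideanSpace ℝ (Fin p) → ℝ}
  {Gψ Gω : EuclideanSpace ℝ (Fin p) → EuclideanSpace ℝ (Fin p)}

lemma bregman_add (x y : EuclideanSpace ℝ (Fin p)) :
    bregman (fun x => ψ x + ω x) (fun x => Gψ x + Gω x) x y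
      = bregman ψ Gψ x y + bregman ω Gω x y := by
  simp only [bregman, inner_add_left]
  ring

lemma bregman_nonneg (hconv : ConvexOn ℝ Set.univ ω) (hω : ∀ x, HasGradientAt ω (Gω x) x)
    (x y : EuclideanSpace ℝ (Fin p)) : 0 ≤ bregman ω Gω x y := by
  have := hconv.add_inner_gradient_le hω x y
  rw [bregman]
  linarith

lemma norm_sub_sq_le_two_mul_memory {L : ℝ} (hL : 0 < L) (hψconv : ConvexOn ℝ Set.univ ψ)
    (hψ : ∀ x, HasGradientAt ψ (Gψ x) x) (hψlip : ∀ a b, ‖Gψ a - Gψ b‖ ≤ L * ‖a - b‖)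
    (hωconv : ConvexOn ℝ Set.univ ω) (hω : ∀ x, HasGradientAt ω (Gω x) x)
    {xstar α : EuclideanSpace ℝ (Fin p)} {m : ℝ}
    (hm : m = 1 / (2 * L) * ‖α - Gψ xstar‖ ^ 2 ∨
      ∃ φ, α = Gψ φ ∧ m = bregman (fun x => ψ x + ω x) (fun x => Gψ x + Gω x) φ xstar) :
    ‖Gψ xstar - α‖ ^ 2 ≤ 2 * L * m := by
  rw [norm_sub_rev]
  rcases hm with rfl | ⟨φ, rfl, rfl⟩
  · rw [← mul_assoc, mul_one_div_cancel (by positivity), one_mul]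
  · rw [bregman_add]
    calc ‖Gψ φ - Gψ xstar‖ ^ 2 ≤ 2 * L * bregman ψ Gψ φ xstar :=
          norm_gradient_sub_sq_le_of_lipschitz hL hψconv hψ hψlip φ xstar
      _ ≤ 2 * L * (bregman ψ Gψ φ xstar + bregman ω Gω φ xstar) := by
          gcongr
          exact le_add_of_nonneg_right (bregman_nonneg hωconv hω φ xstar)

end Bregman

theorem dense_variance_bound_general
    {n : ℕ}
    (ψ : Fin n → EuclideanSpace ℝ (Fin p) → ℝ)
    (gradψ : Fin n → EuclideanSpace ℝ (Fin p) → EuclideanSpace ℝ (Fin p))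
    (Lψ : ℝ)
    (hψconv : ∀ i, ConvexOn ℝ Set.univ (ψ i))
    (hψdiff : ∀ i x, HasGradientAt (ψ i) (gradψ i x) x)
    (hψlip : ∀ i x y, ‖gradψ i x - gradψ i y‖ ≤ Lψ * ‖x - y‖)
    (ω : EuclideanSpace ℝ (Fin p) → ℝ)
    (gradω : EuclideanSpace ℝ (Fin p) → EuclideanSpace ℝ (Fin p))
    (Lω : ℝ)
    (hωconv : ConvexOn ℝ Set.univ ω)
    (hωdiff : ∀ x, HasGradientAt ω (gradω x) x)
    (hωlip : ∀ x y, ‖gradω x - gradω y‖ ≤ Lω * ‖x - y‖)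
    (Lf : ℝ) (hLf : Lf = Lψ + Lω) (hLfpos : 0 < Lf)
    -- summands `f_i = ψ_i + ω` and the full smooth term `f`
    (fj : Fin n → EuclideanSpace ℝ (Fin p) → ℝ)
    (hfj : ∀ j x, fj j x = ψ j x + ω x)
    (gradfj : Fin n → EuclideanSpace ℝ (Fin p) → EuclideanSpace ℝ (Fin p))
    (hgradfj : ∀ j x, gradfj j x = gradψ j x + gradω x)
    (gradf : EuclideanSpace ℝ (Fin p) → EuclideanSpace ℝ (Fin p))
    (hgradf : ∀ x, gradf x = (n : ℝ)⁻¹ • ∑ j, gradψ j x + gradω x)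
    -- the nonsmooth terms and a minimizer `x*` of the primal objective
    (xstar : EuclideanSpace ℝ (Fin p))
    -- current state: point `z`, stored gradients `α`, memory-Lyapunov values `m`, `H_t`
    (z : EuclideanSpace ℝ (Fin p))
    (α : Fin n → EuclideanSpace ℝ (Fin p)) (m : Fin n → ℝ)
    -- the structural invariant of the memory: each `m j` is either still at its initial
    -- value `(1/(2L_f))‖α_j − ∇ψ_j(x*)‖²`, or `α_j = ∇ψ_j(φ)` and `m j = B_{f_j}(φ, x*)`
    -- for the iterate `φ` at which the memory was last updated
    (hstruct : ∀ j, m j = 1 / (2 * Lf) * ‖α j - gradψ j xstar‖ ^ 2 ∨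
      ∃ φ, α j = gradψ j φ ∧ m j = bregman (fj j) (gradfj j) φ xstar)
    (Ht : ℝ) (hHt : Ht = (n : ℝ)⁻¹ * ∑ j, m j)
    -- the gradient estimator
    (v : Fin n → EuclideanSpace ℝ (Fin p))
    (hv : ∀ i, v i = gradψ i z - α i + (n : ℝ)⁻¹ • ∑ j, α j + gradω z) :
    ∀ η : ℝ, 0 < η →
      (n : ℝ)⁻¹ * ∑ i, ‖v i - gradf z‖ ^ 2
        ≤ (1 + η) * ((n : ℝ)⁻¹ * ∑ i, ‖gradfj i z - gradfj i xstar‖ ^ 2)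
          + 2 * (1 + η⁻¹) * Lf * Ht := by
  intro η hη
  obtain rfl : fj = fun j x => ψ j x + ω x := funext₂ hfj
  have hmemory (j : Fin n) : ‖gradψ j xstar - α j‖ ^ 2 ≤ 2 * Lf * m j := by
    refine norm_sub_sq_le_two_mul_memory hLfpos (hψconv j) (hψdiff j) ?_ hωconv hωdiff ?_
    · exact hLf ▸ norm_sub_le_add_mul_of_lipschitz_bounds (hψlip j) hωlip
    · simpa only [funext (hgradfj j)] using hstruct j
  have hcentered (i : Fin n) :
      v i - gradf z = (gradψ i z - α i) - (n : ℝ)⁻¹ • ∑ j, (gradψ j z - α j) := by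
    rw [hv, hgradf, sum_sub_distrib, smul_sub]
    abel
  have hshifted (i : Fin n) : gradψ i z - α i - (gradω xstar - gradω z)
      = gradfj i z - gradfj i xstar + (gradψ i xstar - α i) := by
    rw [hgradfj, hgradfj]
    abel
  calc (n : ℝ)⁻¹ * ∑ i, ‖v i - gradf z‖ ^ 2
      ≤ (n : ℝ)⁻¹ * ∑ i, ‖gradfj i z - gradfj i xstar + (gradψ i xstar - α i)‖ ^ 2 := by
        simp only [hcentered, ← hshifted]
        gcongr (n : ℝ)⁻¹ * ?_
        simpa only [Fintype.card_fin] using sum_norm_sub_average_sq_le_sum_norm_sub_sq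
          (fun i => gradψ i z - α i) (gradω xstar - gradω z)
    _ ≤ (n : ℝ)⁻¹ * ∑ i, ((1 + η) * ‖gradfj i z - gradfj i xstar‖ ^ 2
          + (1 + η⁻¹) * (2 * Lf * m i)) := by
        gcongr with i
        exact (norm_add_sq_le_of_pos hη _ _).trans (by gcongr; exact hmemory i)
    _ = _ := by
        rw [hHt, sum_add_distrib, ← mul_sum, ← mul_sum, ← mul_sum]
        ring

/-- bound on gradient-estimate variance, dense variant.  Conditioned on the
past (so the current point `z = z_t` and the memory `α j = α_{j,t}`, `m j = m_{j,t}` are fixed),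
the dense VR-TOS estimator `v_i = ∇ψ_i(z) − α_i + ᾱ + ∇ω(z)` satisfies, for every `η > 0`,
`E‖v − ∇f(z)‖² ≤ (1+η) E‖∇f_i(z) − ∇f_i(x*)‖² + 2(1+η⁻¹) L_f H_t`. -/
theorem dense_variance_bound
    {n : ℕ} (hn : 0 < n)
    (ψ : Fin n → EuclideanSpace ℝ (Fin p) → ℝ)
    (gradψ : Fin n → EuclideanSpace ℝ (Fin p) → EuclideanSpace ℝ (Fin p))
    (Lψ : ℝ)
    (hψconv : ∀ i, ConvexOn ℝ Set.univ (ψ i))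
    (hψdiff : ∀ i x, HasGradientAt (ψ i) (gradψ i x) x)
    (hψlip : ∀ i x y, ‖gradψ i x - gradψ i y‖ ≤ Lψ * ‖x - y‖)
    (ω : EuclideanSpace ℝ (Fin p) → ℝ)
    (gradω : EuclideanSpace ℝ (Fin p) → EuclideanSpace ℝ (Fin p))
    (Lω : ℝ)
    (hωconv : ConvexOn ℝ Set.univ ω)
    (hωdiff : ∀ x, HasGradientAt ω (gradω x) x)
    (hωlip : ∀ x y, ‖gradω x - gradω y‖ ≤ Lω * ‖x - y‖)
    (Lf : ℝ) (hLf : Lf = Lψ + Lω) (hLfpos : 0 < Lf)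
    -- summands `f_i = ψ_i + ω` and the full smooth term `f`
    (fj : Fin n → EuclideanSpace ℝ (Fin p) → ℝ)
    (hfj : ∀ j x, fj j x = ψ j x + ω x)
    (gradfj : Fin n → EuclideanSpace ℝ (Fin p) → EuclideanSpace ℝ (Fin p))
    (hgradfj : ∀ j x, gradfj j x = gradψ j x + gradω x)
    (f : EuclideanSpace ℝ (Fin p) → ℝ)
    (hf : ∀ x, f x = (n : ℝ)⁻¹ * ∑ j, ψ j x + ω x)
    (gradf : EuclideanSpace ℝ (Fin p) → EuclideanSpace ℝ (Fin p))
    (hgradf : ∀ x, gradf x = (n : ℝ)⁻¹ • ∑ j, gradψ j x + gradω x)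
    -- the nonsmooth terms and a minimizer `x*` of the primal objective
    (g h : EuclideanSpace ℝ (Fin p) → EReal)
    (hg : ProperLscConvex g) (hh : ProperLscConvex h)
    (xstar : EuclideanSpace ℝ (Fin p))
    (hxstar : ∀ x, ((f xstar : ℝ) : EReal) + g xstar + h xstar ≤ ((f x : ℝ) : EReal) + g x + h x)
    -- current state: point `z`, stored gradients `α`, memory-Lyapunov values `m`, `H_t`
    (z : EuclideanSpace ℝ (Fin p))
    (α : Fin n → EuclideanSpace ℝ (Fin p)) (m : Fin n → ℝ)
    -- the structural invariant of the memory: each `m j` is either still at its initial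
    -- value `(1/(2L_f))‖α_j − ∇ψ_j(x*)‖²`, or `α_j = ∇ψ_j(φ)` and `m j = B_{f_j}(φ, x*)`
    -- for the iterate `φ` at which the memory was last updated
    (hstruct : ∀ j, m j = 1 / (2 * Lf) * ‖α j - gradψ j xstar‖ ^ 2 ∨
      ∃ φ, α j = gradψ j φ ∧ m j = bregman (fj j) (gradfj j) φ xstar)
    (Ht : ℝ) (hHt : Ht = (n : ℝ)⁻¹ * ∑ j, m j)
    -- the gradient estimator
    (v : Fin n → EuclideanSpace ℝ (Fin p))
    (hv : ∀ i, v i = gradψ i z - α i + (n : ℝ)⁻¹ • ∑ j, α j + gradω z) :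
    ∀ η : ℝ, 0 < η →
      (n : ℝ)⁻¹ * ∑ i, ‖v i - gradf z‖ ^ 2
        ≤ (1 + η) * ((n : ℝ)⁻¹ * ∑ i, ‖gradfj i z - gradfj i xstar‖ ^ 2)
          + 2 * (1 + η⁻¹) * Lf * Ht :=
  dense_variance_bound_general ψ gradψ Lψ hψconv hψdiff hψlip ω gradω Lω hωconv hωdiff hωlip Lf hLf
    hLfpos fj hfj gradfj hgradfj gradf hgradf xstar z α m hstruct Ht hHt v hv
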